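/- Let L_G be the weighted Laplacian of a connected graph with positive weights and let L_Gᵏ be the Laplacian of the complete graph with positive weights wᵢⱼᵏ = (1/(2ξⱼ))/(ξᵢ∑ₗ 1/ξₗ) symmetrized appropriately (assume L_Gᵏ symmetric positive semidefinite with kernel containing span{1}). If Q' has orthonormal columns orthogonal to 1, then (Q')ᵀ(L_G + L_Gᵏ)Q' is positive definite, and consequently every solution of λ̇ᵛ = −(L_G + L_Gᵏ)λᵛ + w_J with 1ᵀw_J = 0 converges to a constant vector λᵛ* satisfying (L_G + L_Gᵏ)λᵛ* = w_J. -/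

import Mathlib

open Finset Filter Matrix

/-- Scalar linear ODE: if `u' = -μ u` everywhere then `u t = u 0 * exp (-μ t)`. -/
lemma expSol_aux {μ : ℝ} {u : ℝ → ℝ} (h : ∀ t, HasDerivAt u (-μ * u t) t) :
    ∀ t, u t = u 0 * Real.exp (-μ * t) := by
  have key : ∀ t, u t * Real.exp (μ * t) = u 0 := by
    have hd : ∀ t, HasDerivAt (fun s => u s * Real.exp (μ * s)) 0 t := by
      intro t
      have he : HasDerivAt (fun s : ℝ => Real.exp (μ * s)) (μ * Real.exp (μ * t)) t := by
        simpa [mul_comm, Function.comp_def] using (Real.hasDerivAt_exp (μ * t)).comp t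
          ((hasDerivAt_id t).const_mul μ)
      have := (h t).fun_mul he
      refine this.congr_deriv ?_
      ring
    have hdiff : Differentiable ℝ (fun s => u s * Real.exp (μ * s)) :=
      fun t => (hd t).differentiableAt
    have hconst := is_const_of_deriv_eq_zero hdiff (fun t => (hd t).deriv)
    intro t
    simpa using hconst t 0
  intro t
  have h1 := key t
  have h2 : Real.exp (μ * t) ≠ 0 := Real.exp_ne_zero _
  rw [neg_mul, Real.exp_neg]
  field_simp
  linarith

/-- If L_G is the weighted Laplacian of a connected graph with
positive weights, L_Gᵏ is symmetric PSD with L_Gᵏ1 = 0, and Q' has orthonormal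
columns orthogonal to 1, then (Q')ᵀ(L_G + L_Gᵏ)Q' is positive definite, and
every solution of λ̇ᵛ = −(L_G + L_Gᵏ)λᵛ + w_J with 1ᵀw_J = 0 converges to a
constant vector λᵛ* satisfying (L_G + L_Gᵏ)λᵛ* = w_J. -/
theorem stmt_16 (n : ℕ) (hn : 2 ≤ n) (G : SimpleGraph (Fin n))
    [DecidableRel G.Adj] (hconn : G.Connected)
    (a : Fin n → Fin n → ℝ)
    (hasym : ∀ i j, G.Adj i j → a i j = a j i)
    (hapos : ∀ i j, G.Adj i j → 0 < a i j)
    (LG : Matrix (Fin n) (Fin n) ℝ)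
    (hLG : ∀ i j, LG i j =
      if i = j then ∑ k ∈ G.neighborFinset i, a i k
      else if G.Adj i j then -(a i j) else 0)
    (LGk : Matrix (Fin n) (Fin n) ℝ) (hk_sym : LGk.IsSymm)
    (hk_psd : ∀ x : Fin n → ℝ, 0 ≤ x ⬝ᵥ (LGk *ᵥ x))
    (hk_one : LGk *ᵥ (fun _ => (1 : ℝ)) = 0)
    (wJ : Fin n → ℝ) (hwJ : ∑ i, wJ i = 0)
    (Q' : Matrix (Fin n) (Fin (n - 1)) ℝ)
    (horth : Q'ᵀ * Q' = 1) (hone : ∀ k, ∑ i, Q' i k = 0) :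
    (Q'ᵀ * (LG + LGk) * Q').PosDef ∧
    ∀ lam : ℝ → Fin n → ℝ,
      (∀ i t, HasDerivAt (fun s => lam s i)
        (-((LG + LGk) *ᵥ lam t) i + wJ i) t) →
      ∃ lamstar : Fin n → ℝ,
        Tendsto lam atTop (nhds lamstar) ∧ (LG + LGk) *ᵥ lamstar = wJ := by
  set W : Fin n → Fin n → ℝ := fun i j => if G.Adj i j then a i j else 0 with hW
  have hWsym : ∀ i j, W i j = W j i := by
    intro i j
    by_cases h : G.Adj i j
    · simp [hW, h, h.symm, hasym i j h]
    · have h' : ¬ G.Adj j i := fun hh => h hh.symm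
      simp [hW, h, h']
  have hWnn : ∀ i j, 0 ≤ W i j := by
    intro i j
    by_cases h : G.Adj i j
    · simpa [hW, h] using (hapos i j h).le
    · simp [hW, h]
  have hWdiag : ∀ i, W i i = 0 := fun i => by simp [hW]
  have hLGentry : ∀ i j, LG i j = (if i = j then ∑ k, W i k else 0) - W i j := by
    intro i j
    rw [hLG]
    by_cases h : i = j
    · subst h
      simp only [if_pos rfl, hWdiag, sub_zero]
      rw [hW, ← Finset.sum_filter]
      refine Finset.sum_congr ?_ fun _ _ => rfl
      ext k
      simp [SimpleGraph.mem_neighborFinset]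
    · by_cases h2 : G.Adj i j <;> simp [h, h2, hW]
  have hmv : ∀ (x : Fin n → ℝ) i, (LG *ᵥ x) i = ∑ j, W i j * (x i - x j) := by
    intro x i
    simp only [mulVec, dotProduct]
    have hterm : ∀ j, LG i j * x j =
        (if j = i then (∑ k, W i k) * x j else 0) - W i j * x j := by
      intro j
      rw [hLGentry]
      by_cases h : i = j
      · subst h; simp [sub_mul]
      · simp [h, Ne.symm h, sub_mul]
    rw [Finset.sum_congr rfl fun j _ => hterm j, Finset.sum_sub_distrib,
      Finset.sum_ite_eq' Finset.univ i (fun j => (∑ k, W i k) * x j)]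
    simp only [Finset.mem_univ, if_true, mul_sub]
    rw [Finset.sum_sub_distrib, ← Finset.sum_mul]
  have hquad : ∀ x : Fin n → ℝ, 2 * (x ⬝ᵥ (LG *ᵥ x)) = ∑ i, ∑ j, W i j * (x i - x j) ^ 2 := by
    intro x
    have h1 : x ⬝ᵥ (LG *ᵥ x) = ∑ i, ∑ j, W i j * (x i * (x i - x j)) := by
      simp only [dotProduct]
      refine Finset.sum_congr rfl fun i _ => ?_
      rw [hmv x i, Finset.mul_sum]
      exact Finset.sum_congr rfl fun j _ => by ring
    have h2 : ∑ i, ∑ j, W i j * (x j * (x j - x i))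
        = ∑ i, ∑ j, W i j * (x i * (x i - x j)) := by
      rw [Finset.sum_comm]
      exact Finset.sum_congr rfl fun i _ => Finset.sum_congr rfl fun j _ => by rw [hWsym j i]
    rw [h1]
    calc 2 * ∑ i, ∑ j, W i j * (x i * (x i - x j))
        = (∑ i, ∑ j, W i j * (x i * (x i - x j)))
          + ∑ i, ∑ j, W i j * (x j * (x j - x i)) := by rw [h2]; ring
      _ = ∑ i, ∑ j, W i j * (x i - x j) ^ 2 := by
          rw [← Finset.sum_add_distrib]
          refine Finset.sum_congr rfl fun i _ => ?_
          rw [← Finset.sum_add_distrib]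
          exact Finset.sum_congr rfl fun j _ => by ring
  have hLGpsd : ∀ x : Fin n → ℝ, 0 ≤ x ⬝ᵥ (LG *ᵥ x) := by
    intro x
    have h := hquad x
    have hnn : (0:ℝ) ≤ ∑ i, ∑ j, W i j * (x i - x j) ^ 2 :=
      Finset.sum_nonneg fun i _ => Finset.sum_nonneg fun j _ =>
        mul_nonneg (hWnn i j) (sq_nonneg _)
    linarith
  have hLGker : ∀ x : Fin n → ℝ, x ⬝ᵥ (LG *ᵥ x) = 0 → ∀ i j, x i = x j := by
    intro x hx
    have hzero : ∑ i, ∑ j, W i j * (x i - x j) ^ 2 = 0 := by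
      rw [← hquad, hx]; ring
    have hterm : ∀ i j, W i j * (x i - x j) ^ 2 = 0 := by
      intro i j
      have h1 := (Finset.sum_eq_zero_iff_of_nonneg (fun i _ =>
        Finset.sum_nonneg fun j _ => mul_nonneg (hWnn i j) (sq_nonneg _))).mp hzero i
        (Finset.mem_univ i)
      exact (Finset.sum_eq_zero_iff_of_nonneg (fun j _ =>
        mul_nonneg (hWnn i j) (sq_nonneg _))).mp h1 j (Finset.mem_univ j)
    have hadj : ∀ i j, G.Adj i j → x i = x j := by
      intro i j hij
      have h1 := hterm i j
      rw [hW] at h1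
      simp only [hij, if_true] at h1
      rcases mul_eq_zero.mp h1 with h | h
      · exact absurd h (ne_of_gt (hapos i j hij))
      · have := pow_eq_zero_iff (n := 2) (by norm_num) |>.mp h
        linarith
    intro i j
    obtain ⟨p⟩ := hconn i j
    induction p with
    | nil => rfl
    | cons h p ih => exact (hadj _ _ h).trans ih
  have hLGsym : LG.IsHermitian := by
    unfold Matrix.IsHermitian
    rw [conjTranspose_eq_transpose_of_trivial]
    ext i j
    rw [transpose_apply, hLGentry, hLGentry, hWsym]
    rcases eq_or_ne i j with h | h
    · subst h; rfl
    · simp [h, Ne.symm h]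
  have hLksym : LGk.IsHermitian := by
    unfold Matrix.IsHermitian
    rw [conjTranspose_eq_transpose_of_trivial]
    exact hk_sym
  set L := LG + LGk with hLdef
  have hLsym : L.IsHermitian := hLGsym.add hLksym
  have hLpsd_on : ∀ x : Fin n → ℝ, 0 ≤ x ⬝ᵥ (L *ᵥ x) := by
    intro x
    rw [hLdef, add_mulVec, dotProduct_add]
    exact add_nonneg (hLGpsd x) (hk_psd x)
  have hLker : ∀ x : Fin n → ℝ, x ⬝ᵥ (L *ᵥ x) = 0 → ∀ i j, x i = x j := by
    intro x hx
    have hk := hk_psd x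
    have hg := hLGpsd x
    rw [hLdef, add_mulVec, dotProduct_add] at hx
    exact hLGker x (by linarith)
  -- Positive definiteness of Q'ᵀ L Q'
  have hQform : ∀ (x : Fin (n-1) → ℝ),
      x ⬝ᵥ ((Q'ᵀ * L * Q') *ᵥ x) = (Q' *ᵥ x) ⬝ᵥ (L *ᵥ (Q' *ᵥ x)) := by
    intro x
    rw [← mulVec_mulVec, ← mulVec_mulVec, dotProduct_mulVec, vecMul_transpose]
  have i0 : Fin n := ⟨0, by omega⟩
  have hPD : (Q'ᵀ * L * Q').PosDef := by
    rw [posDef_iff_dotProduct_mulVec]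
    constructor
    · show (Q'ᵀ * L * Q')ᴴ = Q'ᵀ * L * Q'
      rw [conjTranspose_eq_transpose_of_trivial, transpose_mul, transpose_mul, transpose_transpose]
      have hLt : Lᵀ = L := by rw [← conjTranspose_eq_transpose_of_trivial]; exact hLsym
      rw [hLt, ← Matrix.mul_assoc]
    · intro x hx
      have hq := hQform x
      set y := Q' *ᵥ x with hy
      have hynz : y ≠ 0 := by
        intro h0
        apply hx
        have hxy : Q'ᵀ *ᵥ y = x := by rw [hy, mulVec_mulVec, horth, one_mulVec]
        rw [h0, mulVec_zero] at hxy
        exact hxy.symm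
      have hnn : 0 ≤ y ⬝ᵥ (L *ᵥ y) := hLpsd_on y
      have hne : y ⬝ᵥ (L *ᵥ y) ≠ 0 := by
        intro h0
        have hc := hLker y h0
        have hsum : ∑ i, y i = 0 := by
          rw [hy]
          simp only [mulVec, dotProduct]
          rw [Finset.sum_comm]
          refine Finset.sum_eq_zero fun k _ => ?_
          rw [← Finset.sum_mul, hone k, zero_mul]
        have hally : ∀ i, y i = y i0 := fun i => hc i i0
        have hsum2 : ∑ i, y i = n * y i0 := by
          rw [Finset.sum_congr rfl fun i _ => hally i]
          simp [Finset.card_univ, mul_comm]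
        have hy0 : y i0 = 0 := by
          rw [hsum2] at hsum
          have hn0 : (0:ℝ) < n := by positivity
          rcases mul_eq_zero.mp hsum with h | h
          · exact absurd h (ne_of_gt hn0)
          · exact h
        apply hynz
        funext i
        rw [hally i, hy0]
        rfl
      have : star x ⬝ᵥ ((Q'ᵀ * L * Q') *ᵥ x) = y ⬝ᵥ (L *ᵥ y) := by
        simpa using hq
      rw [this]
      exact lt_of_le_of_ne hnn (Ne.symm hne)
  -- spectral decomposition
  set U := (hLsym.eigenvectorUnitary : Matrix (Fin n) (Fin n) ℝ) with hUdef
  set μ := hLsym.eigenvalues with hμdef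
  have hspec : L = U * diagonal μ * star U := by simpa using hLsym.spectral_theorem
  have hUsU : star U * U = 1 := Unitary.coe_star_mul_self hLsym.eigenvectorUnitary
  have hUUs : U * star U = 1 := Unitary.coe_mul_star_self hLsym.eigenvectorUnitary
  have hLPSD : L.PosSemidef := posSemidef_iff_dotProduct_mulVec.mpr ⟨hLsym, fun x => by simpa using hLpsd_on x⟩
  have hμnn : ∀ k, 0 ≤ μ k := fun k => hLPSD.eigenvalues_nonneg k
  have hLU : L * U = U * diagonal μ := by
    rw [hspec, mul_assoc, mul_assoc, hUsU, mul_one]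
  have hcol : ∀ k, L *ᵥ (fun i => U i k) = fun i => μ k * U i k := by
    intro k
    funext i
    have h1 := congrFun (congrFun hLU i) k
    rw [Matrix.mul_apply, Matrix.mul_diagonal] at h1
    simpa [mulVec, dotProduct, mul_comm] using h1
  have hstarU : ∀ k i, star U k i = U i k := by
    intro k i
    simp [star_apply]
  have hconstw : ∀ (v : Fin n → ℝ), (∀ i j, v i = v j) → v ⬝ᵥ wJ = 0 := by
    intro v hv
    have : v ⬝ᵥ wJ = v i0 * ∑ i, wJ i := by
      rw [Finset.mul_sum]
      exact Finset.sum_congr rfl fun i _ => by rw [hv i i0]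
    rw [this, hwJ, mul_zero]
  have hweig : ∀ k, μ k = 0 → (star U *ᵥ wJ) k = 0 := by
    intro k hk
    have hv := hcol k
    rw [hk] at hv
    simp only [zero_mul] at hv
    have hquad0 : (fun i => U i k) ⬝ᵥ (L *ᵥ (fun i => U i k)) = 0 := by
      rw [hv]
      simp [dotProduct]
    have hc := hLker _ hquad0
    have : (star U *ᵥ wJ) k = (fun i => U i k) ⬝ᵥ wJ := by
      simp only [mulVec, dotProduct]
      exact Finset.sum_congr rfl fun i _ => by rw [hstarU]
    rw [this, hconstw _ hc]
  -- particular solution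
  set d : Fin n → ℝ := fun k => if μ k = 0 then 0 else (star U *ᵥ wJ) k / μ k with hd
  set lam0 : Fin n → ℝ := U *ᵥ d with hlam0
  have hlam0w : L *ᵥ lam0 = wJ := by
    rw [hlam0, mulVec_mulVec, hLU, ← mulVec_mulVec]
    have hdd : diagonal μ *ᵥ d = star U *ᵥ wJ := by
      funext k
      rw [mulVec_diagonal]
      by_cases h : μ k = 0
      · simp [hd, h, hweig k h]
      · simp only [hd, h, if_false]
        field_simp
    rw [hdd, mulVec_mulVec, hUUs, one_mulVec]
  refine ⟨hPD, ?_⟩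
  intro lam hlam
  set e : ℝ → Fin n → ℝ := fun t i => lam t i - lam0 i with he
  have hesub : ∀ t, e t = lam t - lam0 := by
    intro t; funext i; simp [he]
  have hde : ∀ i t, HasDerivAt (fun s => e s i) (-(L *ᵥ e t) i) t := by
    intro i t
    have h1 := (hlam i t).sub_const (lam0 i)
    have h2 : -(L *ᵥ lam t) i + wJ i = -(L *ᵥ e t) i := by
      rw [hesub t, mulVec_sub, hlam0w]
      simp only [Pi.sub_apply]
      ring
    rw [← h2]
    exact h1
  set u : ℝ → Fin n → ℝ := fun t => star U *ᵥ e t with hu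
  have hdu : ∀ k t, HasDerivAt (fun s => u s k) (-(μ k) * u t k) t := by
    intro k t
    have hsum : HasDerivAt (fun s => ∑ i, star U k i * e s i)
        (∑ i, star U k i * (-(L *ᵥ e t) i)) t := by
      apply HasDerivAt.fun_sum
      intro i _
      exact (hde i t).const_mul _
    have heq1 : (fun s => ∑ i, star U k i * e s i) = fun s => u s k := by
      funext s
      simp [hu, mulVec, dotProduct]
    rw [heq1] at hsum
    have heq2 : ∑ i, star U k i * (-(L *ᵥ e t) i) = -(μ k) * u t k := by
      have h3 : ∑ i, star U k i * (-(L *ᵥ e t) i) = -((star U *ᵥ (L *ᵥ e t)) k) := by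
        show _ = -(star U k ⬝ᵥ (L *ᵥ e t))
        rw [dotProduct, ← Finset.sum_neg_distrib]
        exact Finset.sum_congr rfl fun i _ => by ring
      have h4 : star U *ᵥ (L *ᵥ e t) = diagonal μ *ᵥ (star U *ᵥ e t) := by
        rw [mulVec_mulVec, mulVec_mulVec]
        congr 1
        rw [hspec, ← mul_assoc, ← mul_assoc, hUsU, one_mul]
      rw [h3, h4, mulVec_diagonal]
      have : (star U *ᵥ e t) k = u t k := rfl
      rw [this]
      ring
    rw [← heq2]
    exact hsum
  have huexp : ∀ k t, u t k = u 0 k * Real.exp (-(μ k) * t) := by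
    intro k t
    exact expSol_aux (fun s => hdu k s) t
  have hlamformula : ∀ t i, lam t i = lam0 i + ∑ k, U i k * (u 0 k * Real.exp (-(μ k) * t)) := by
    intro t i
    have h1 : e t = U *ᵥ u t := by
      rw [hu, mulVec_mulVec, hUUs, one_mulVec]
    have h2 : lam t i = lam0 i + (U *ᵥ u t) i := by
      have := congrFun h1 i
      simp only [he] at this
      linarith [this]
    rw [h2]
    congr 1
    simp only [mulVec, dotProduct]
    exact Finset.sum_congr rfl fun k _ => by rw [huexp k t]
  refine ⟨fun i => lam0 i + ∑ k, if μ k = 0 then U i k * u 0 k else 0, ?_, ?_⟩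
  · rw [tendsto_pi_nhds]
    intro i
    have htend : Tendsto (fun t => lam0 i + ∑ k, U i k * (u 0 k * Real.exp (-(μ k) * t)))
        atTop (nhds (lam0 i + ∑ k, if μ k = 0 then U i k * u 0 k else 0)) := by
      apply Tendsto.const_add
      apply tendsto_finset_sum
      intro k _
      by_cases h : μ k = 0
      · simpa [h] using tendsto_const_nhds
      · have hpos : 0 < μ k := lt_of_le_of_ne (hμnn k) (Ne.symm h)
        simp only [h, if_false]
        have h1 : Tendsto (fun t : ℝ => -(μ k) * t) atTop atBot :=
          Tendsto.const_mul_atTop_of_neg (by linarith) tendsto_id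
        have h2 := Real.tendsto_exp_atBot.comp h1
        have h3 := h2.const_mul (U i k * u 0 k)
        simpa [mul_assoc, Function.comp] using h3
    exact htend.congr (fun t => (hlamformula t i).symm)
  · have hrw : (fun i => lam0 i + ∑ k, if μ k = 0 then U i k * u 0 k else 0)
        = lam0 + U *ᵥ (fun k => if μ k = 0 then u 0 k else 0) := by
      funext i
      simp only [Pi.add_apply, mulVec, dotProduct]
      congr 1
      exact Finset.sum_congr rfl fun k _ => by by_cases h : μ k = 0 <;> simp [h]
    rw [hrw, mulVec_add, hlam0w, mulVec_mulVec, hLU, ← mulVec_mulVec]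
    have hzero : diagonal μ *ᵥ (fun k => if μ k = 0 then u 0 k else 0) = 0 := by
      funext k
      rw [mulVec_diagonal]
      by_cases h : μ k = 0 <;> simp [h]
    rw [hzero, mulVec_zero, add_zero]
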